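/- arXiv:2004.13018 — 6 statements merged into one kernel-verified Lean document; each statement's English description precedes it below -/
import Mathlib

section
/- (Local to global optimality, Lemma 3.3, with the explicit constant from its proof.) Let α > 0 and suppose S ∈ ℐ is a (2, α)-local maximum with det(A_S) ≠ 0. Then for every L ∈ ℐ, |det(A_L)| ≤ ((2k² + 8k)/α)^{2k} · |det(A_S)|; in particular ((2k² + 8k)/α)^{2k} · |det(A_S)| ≥ maxdet_k(A). -/
open Finset

/-- The determinant of the square submatrix of `A` with rows `R` (in increasing order)
and columns `C` (in increasing order); junk value `0` if `R.card ≠ C.card`. -/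
noncomputable def subdet {m n : ℕ} (A : Matrix (Fin m) (Fin n) ℝ)
    (R : Finset (Fin m)) (C : Finset (Fin n)) : ℝ :=
  if h : R.card = C.card then
    (A.submatrix (R.orderEmbOfFin rfl) (C.orderEmbOfFin h.symm)).det
  else 0

/-- `maxdet k A` is the maximum of `|det A_S|` over all pairs of a `k`-subset of rows
and a `k`-subset of columns. -/
noncomputable def maxdet (k : ℕ) {m n : ℕ} (A : Matrix (Fin m) (Fin n) ℝ) : ℝ :=
  sSup {x : ℝ | ∃ (R : Finset (Fin m)) (C : Finset (Fin n)),
    R.card = k ∧ C.card = k ∧ x = |subdet A R C|}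

/-!
Write `B = A_S` and split `A = M B N + E` with `M = A_{·,S_C} B⁻¹`, `N = B⁻¹ A_{S_R,·}` and `E` the
Schur complement of `B` in `A`. By Cramer's rule `M_{ri} det B` and `N_{jc} det B` are minors of
index pairs at distance one from `S`, so `|M|, |N| ≤ 1/α`. The cofactor `(j, i)` of `A` restricted
to `S_R + r`, `S_C + c` is a minor at distance two from `S`, and by Jacobi's formula it equals
`det B · (E_{rc} (B⁻¹)_{ji} + N_{jc} M_{ri})`; hence `|E_{rc}| |(B⁻¹)_{ji}| ≤ 2/α²`.
Finally `det A_L = det B · det [[B⁻¹, N_L], [-M_L, E_L]]`, and after rescaling the blocks by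
`diag(s, 1)` every entry of that matrix is at most `2/α` in absolute value, so
`|det A_L| ≤ (2k)! (2/α)^(2k) |det B|`.
-/

open Matrix
open scoped Nat

theorem Function.Injective.exists_equiv_eq_comp_of_range_eq {α α' β : Type*} {f : α → β}
    {f' : α' → β} (hf : Function.Injective f) (hf' : Function.Injective f')
    (h : Set.range f = Set.range f') : ∃ e : α ≃ α', f = f' ∘ e :=
  ⟨(Equiv.ofInjective f hf).trans ((Equiv.setCongr h).trans (Equiv.ofInjective f' hf').symm),
    funext fun a => by simp [Equiv.apply_ofInjective_symm]⟩

theorem card_symmDiff_image_update_le {ι α : Type*} [Fintype ι] [DecidableEq ι] [DecidableEq α]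
    (f : ι → α) (i : ι) (r : α) :
    #(symmDiff (univ.image f) (univ.image (Function.update f i r))) ≤ 2 := by
  refine (card_le_card fun x hx => ?_).trans (card_le_two (a := f i) (b := r))
  rcases Finset.mem_symmDiff.mp hx with ⟨hxf, hxu⟩ | ⟨hxu, hxf⟩
  · obtain ⟨a, -, rfl⟩ := mem_image.mp hxf
    by_cases ha : a = i
    · simp [ha]
    · exact absurd (mem_image.mpr ⟨a, mem_univ a, Function.update_of_ne ha r f⟩) hxu
  · obtain ⟨a, -, rfl⟩ := mem_image.mp hxu
    by_cases ha : a = i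
    · simp [ha]
    · exact absurd (mem_image.mpr ⟨a, mem_univ a, (Function.update_of_ne ha r f).symm⟩) hxf

theorem le_inv_of_mul_mul_le {𝕜 : Type*} [Field 𝕜] [LinearOrder 𝕜] [IsStrictOrderedRing 𝕜]
    {α d x : 𝕜} (hα : 0 < α) (hd : 0 < d) (h : α * (d * x) ≤ d) : x ≤ α⁻¹ := by
  rw [← one_mul α⁻¹, le_mul_inv_iff₀ hα]
  exact le_of_mul_le_mul_right (by linear_combination h) hd

namespace Matrix

section Field

variable {ι κ m n 𝕜 : Type*} [Fintype ι] [DecidableEq ι] [Fintype κ] [DecidableEq κ] [Field 𝕜]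

theorem adjugate_eq_det_smul_inv (K : Matrix ι ι 𝕜) (hK : K.det ≠ 0) :
    K.adjugate = K.det • K⁻¹ := by
  rw [inv_def, smul_smul, Ring.inverse_eq_inv', mul_inv_cancel₀ hK, one_smul]

theorem det_updateRow_eq_det_mul_vecMul_inv (B : Matrix ι ι 𝕜) (hB : B.det ≠ 0)
    (a : ι → 𝕜) (i : ι) : (B.updateRow i a).det = B.det * (a ᵥ* B⁻¹) i := by
  rw [← cramer_transpose_apply, ← det_smul_inv_vecMul_eq_cramer_transpose _ _ hB.isUnit,
    Pi.smul_apply, smul_eq_mul]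

theorem det_updateCol_eq_det_mul_inv_mulVec (B : Matrix ι ι 𝕜) (hB : B.det ≠ 0)
    (b : ι → 𝕜) (j : ι) : (B.updateCol j b).det = B.det * (B⁻¹ *ᵥ b) j := by
  rw [← cramer_apply, ← det_smul_inv_mulVec_eq_cramer _ _ hB.isUnit, Pi.smul_apply, smul_eq_mul]

theorem toBlocks₁₁_adjugate_fromBlocks (B : Matrix ι ι 𝕜) (b : Matrix ι κ 𝕜)
    (a : Matrix κ ι 𝕜) (s : Matrix κ κ 𝕜) (hB : B.det ≠ 0) (hD : (s - a * B⁻¹ * b).det ≠ 0) :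
    (fromBlocks B b a s).adjugate.toBlocks₁₁ =
      B.det • ((s - a * B⁻¹ * b).det • B⁻¹ + B⁻¹ * b * (s - a * B⁻¹ * b).adjugate * a * B⁻¹) := by
  let := B.invertibleOfIsUnitDet hB.isUnit
  let := (s - a * B⁻¹ * b).invertibleOfIsUnitDet hD.isUnit
  rw [← invOf_eq_nonsing_inv] at hD ⊢
  let := fromBlocks₁₁Invertible B b a s
  have hK : (fromBlocks B b a s).det ≠ 0 := by
    rw [det_fromBlocks₁₁]; exact mul_ne_zero (by simpa [invOf_eq_nonsing_inv] using hB) hD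
  rw [adjugate_eq_det_smul_inv _ hK, adjugate_eq_det_smul_inv _ hD, ← invOf_eq_nonsing_inv,
    invOf_fromBlocks₁₁_eq, det_fromBlocks₁₁, ← invOf_eq_nonsing_inv]
  rw [fromBlocks_smul, toBlocks_fromBlocks₁₁]
  simp only [smul_add, mul_smul, Matrix.mul_smul, Matrix.smul_mul]

theorem det_fromBlocks_inv_mul_det (B : Matrix ι ι 𝕜) (hB : B.det ≠ 0)
    (M : Matrix κ ι 𝕜) (N : Matrix ι κ 𝕜) (E : Matrix κ κ 𝕜) :
    (fromBlocks B⁻¹ N (-M) E).det * B.det = (E + M * B * N).det := by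
  have hB' : IsUnit B⁻¹.det := isUnit_nonsing_inv_det_iff.mpr hB.isUnit
  let := B⁻¹.invertibleOfIsUnitDet hB'
  rw [det_fromBlocks₁₁, invOf_eq_nonsing_inv, nonsing_inv_nonsing_inv _ hB.isUnit,
    Matrix.neg_mul, Matrix.neg_mul, sub_neg_eq_add, mul_right_comm, ← det_mul,
    nonsing_inv_mul _ hB.isUnit, det_one, one_mul]

noncomputable def rowCoeffs (A : Matrix m n 𝕜) (p : ι → m) (q : ι → n) : Matrix m ι 𝕜 :=
  A.submatrix id q * (A.submatrix p q)⁻¹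

noncomputable def colCoeffs (A : Matrix m n 𝕜) (p : ι → m) (q : ι → n) : Matrix ι n 𝕜 :=
  (A.submatrix p q)⁻¹ * A.submatrix p id

noncomputable def schurComplement (A : Matrix m n 𝕜) (p : ι → m) (q : ι → n) : Matrix m n 𝕜 :=
  A - A.submatrix id q * (A.submatrix p q)⁻¹ * A.submatrix p id

theorem submatrix_eq_schurComplement_add_mul (A : Matrix m n 𝕜) (p : ι → m) (q : ι → n)
    (hB : (A.submatrix p q).det ≠ 0) {κ : Type*} (f : κ → m) (g : κ → n) :
    A.submatrix f g = (schurComplement A p q).submatrix f g +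
      (rowCoeffs A p q).submatrix f id * A.submatrix p q * (colCoeffs A p q).submatrix id g := by
  have h : rowCoeffs A p q * A.submatrix p q * colCoeffs A p q =
      A.submatrix id q * (A.submatrix p q)⁻¹ * A.submatrix p id := by
    rw [rowCoeffs, colCoeffs, Matrix.mul_assoc _ _ (A.submatrix p q),
      nonsing_inv_mul _ hB.isUnit, Matrix.mul_one, Matrix.mul_assoc]
  rw [← submatrix_id_id (A.submatrix p q), ← submatrix_mul _ _ _ _ _ Function.bijective_id,
    ← submatrix_mul _ _ _ _ _ Function.bijective_id, h]
  ext; simp [schurComplement]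

theorem adjugate_submatrix_sumElim_inl_inl (A : Matrix m n 𝕜) (p : ι → m) (q : ι → n)
    (hB : (A.submatrix p q).det ≠ 0) (r : m) (c : n) (hrc : schurComplement A p q r c ≠ 0)
    (i j : ι) :
    (A.submatrix (Sum.elim p fun _ : Unit => r) (Sum.elim q fun _ : Unit => c)).adjugate
        (.inl j) (.inl i) =
      (A.submatrix p q).det * (schurComplement A p q r c * (A.submatrix p q)⁻¹ j i +
        colCoeffs A p q j c * rowCoeffs A p q r i) := by
  set K := A.submatrix (Sum.elim p fun _ : Unit => r) (Sum.elim q fun _ : Unit => c)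
  have hS : K.toBlocks₂₂ - K.toBlocks₂₁ * (A.submatrix p q)⁻¹ * K.toBlocks₁₂ =
      of fun _ _ => schurComplement A p q r c := by
    ext; simp [K, schurComplement, toBlocks₁₂, toBlocks₂₁, toBlocks₂₂, mul_apply]
  have h := toBlocks₁₁_adjugate_fromBlocks (A.submatrix p q) K.toBlocks₁₂ K.toBlocks₂₁
    K.toBlocks₂₂ hB (by rwa [hS, det_unique])
  have hK : fromBlocks (A.submatrix p q) K.toBlocks₁₂ K.toBlocks₂₁ K.toBlocks₂₂ = K :=
    fromBlocks_toBlocks K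
  rw [hS, hK] at h
  have := congrFun (congrFun h j) i
  simp [K, toBlocks₁₁, toBlocks₁₂, toBlocks₂₁, rowCoeffs, colCoeffs, mul_apply,
    adjugate_subsingleton] at this ⊢
  rw [this, Finset.mul_sum]
  simp only [mul_assoc]

variable [LinearOrder 𝕜] [IsStrictOrderedRing 𝕜]

theorem abs_det_fromBlocks_le (P Q R T : Matrix ι ι 𝕜) {β γ : 𝕜} (hβ : 0 < β) (hγ : 0 < γ)
    (hP : ∀ a b, |P a b| ≤ β) (hQ : ∀ a b, |Q a b| ≤ γ)
    (hR : ∀ a b, |R a b| ≤ γ) (hT : ∀ a b, β * |T a b| ≤ γ ^ 2) :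
    |(fromBlocks P Q R T).det| ≤ (2 * Fintype.card ι)! * γ ^ (2 * Fintype.card ι) := by
  -- multiplying by `D = diag(s, 1)` on both sides, with `s = γ / β`, bounds every entry by `s γ`
  set s := γ / β with hs
  have hs0 : 0 < s := div_pos hγ hβ
  have hsβ : s * β = γ := div_mul_cancel₀ γ hβ.ne'
  set D : Matrix (ι ⊕ ι) (ι ⊕ ι) 𝕜 := fromBlocks (s • 1) 0 0 1
  have hscaled : D * fromBlocks P Q R T * D = fromBlocks ((s * s) • P) (s • Q) (s • R) T := by
    simp [D, fromBlocks_multiply, smul_smul]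
  have hdetD : D.det = s ^ Fintype.card ι := by
    simp [D]
  have hentries : ∀ a b, |(fromBlocks ((s * s) • P) (s • Q) (s • R) T) a b| ≤ s * γ := by
    rintro (a | a) (b | b)
    · simp only [fromBlocks_apply₁₁, smul_apply, smul_eq_mul, abs_mul, abs_of_pos hs0]
      calc s * s * |P a b| ≤ s * s * β := by gcongr; exact hP a b
        _ = s * γ := by rw [mul_assoc, hsβ]
    · simp only [fromBlocks_apply₁₂, smul_apply, smul_eq_mul, abs_mul, abs_of_pos hs0]
      gcongr; exact hQ a b
    · simp only [fromBlocks_apply₂₁, smul_apply, smul_eq_mul, abs_mul, abs_of_pos hs0]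
      gcongr; exact hR a b
    · rw [fromBlocks_apply₂₂, show s * γ = γ ^ 2 / β by rw [hs]; ring, le_div_iff₀ hβ, mul_comm]
      exact hT a b
  have hle := det_le (abv := AbsoluteValue.abs) hentries
  rw [← hscaled, det_mul, det_mul, hdetD, Fintype.card_sum, ← two_mul, nsmul_eq_mul] at hle
  simp only [AbsoluteValue.abs_apply, abs_mul, abs_pow, abs_of_pos hs0, mul_pow] at hle
  rw [mul_right_comm, ← pow_add, ← two_mul, mul_left_comm] at hle
  exact le_of_mul_le_mul_left hle (by positivity)

end Field

section CommRing

variable {ι m n R : Type*} [Fintype ι] [DecidableEq ι] [CommRing R]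

theorem det_submatrix_eq_zero_of_not_injective (A : Matrix m n R) {f : ι → m} {g : ι → n}
    (hfg : ¬(f.Injective ∧ g.Injective)) : (A.submatrix f g).det = 0 := by
  simp_rw [not_and_or, Function.not_injective_iff] at hfg
  obtain ⟨a, b, hf, hab⟩ | ⟨a, b, hg, hab⟩ := hfg
  · exact det_zero_of_row_eq hab (funext fun _ => by simp only [submatrix_apply, hf])
  · exact det_zero_of_column_eq hab fun _ => by simp only [submatrix_apply, hg]

variable [LinearOrder R] [IsStrictOrderedRing R]

theorem abs_adjugate_submatrix_sumElim (A : Matrix m n R) (f : ι → m) (g : ι → n)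
    (r : m) (c : n) (i j : ι) :
    |(A.submatrix (Sum.elim f fun _ : Unit => r) (Sum.elim g fun _ : Unit => c)).adjugate
        (.inl j) (.inl i)| =
      |(A.submatrix (Function.update f i r) (Function.update g j c)).det| := by
  -- swapping the bordering row and column into the positions `i`, `j` makes the cofactor
  -- matrix block triangular
  set P := ((A.submatrix (Sum.elim f fun _ : Unit => r) (Sum.elim g fun _ : Unit => c)).updateRow
    (.inl i) (Pi.single (.inl j) 1)).submatrix (Equiv.swap (.inl i) (.inr ()))
      (Equiv.swap (.inl j) (.inr ()))
  have h₁₁ : P.toBlocks₁₁ = A.submatrix (Function.update f i r) (Function.update g j c) := by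
    ext x y
    by_cases hx : x = i <;> by_cases hy : y = j <;>
      simp [P, toBlocks₁₁, updateRow_apply, Equiv.swap_apply_def, hx, hy]
  have h₂₁ : P.toBlocks₂₁ = 0 := by
    ext _ y
    by_cases hy : y = j <;> simp [P, toBlocks₂₁, Equiv.swap_apply_def, hy]
  have h₂₂ : P.toBlocks₂₂ = 1 := by
    ext; simp [P, toBlocks₂₂]
  rw [adjugate_apply, ← abs_det_submatrix_equiv_equiv (Equiv.swap (.inl i) (.inr ()))
    (Equiv.swap (.inl j) (.inr ()))]
  change |P.det| = _
  rw [← fromBlocks_toBlocks P, h₁₁, h₂₁, h₂₂, det_fromBlocks_zero₂₁, det_one, mul_one]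

end CommRing

end Matrix

section SwapLocalMax

variable {ι m n 𝕜 : Type*} [Fintype ι] [DecidableEq ι] [Field 𝕜] [LinearOrder 𝕜]
  [IsStrictOrderedRing 𝕜]

/-- No exchange of one row and one column of `A_{pq}` increases `|det|` by a factor more than
`1 / α`: the part of `(2, α)`-local maximality that the bound rests on. -/
def IsSwapLocalMax (α : 𝕜) (A : Matrix m n 𝕜) (p : ι → m) (q : ι → n) : Prop :=
  ∀ i j r c, α * |(A.submatrix (Function.update p i r) (Function.update q j c)).det| ≤
    |(A.submatrix p q).det|

namespace IsSwapLocalMax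

variable {α : 𝕜} {A : Matrix m n 𝕜} {p : ι → m} {q : ι → n}

theorem le_one (h : IsSwapLocalMax α A p q) (hB : (A.submatrix p q).det ≠ 0) (i : ι) :
    α ≤ 1 := by
  have := h i i (p i) (q i)
  rw [Function.update_eq_self, Function.update_eq_self] at this
  exact le_of_mul_le_mul_right (by simpa using this) (abs_pos.mpr hB)

theorem abs_rowCoeffs_le (h : IsSwapLocalMax α A p q) (hα : 0 < α)
    (hB : (A.submatrix p q).det ≠ 0) (r : m) (i : ι) : |A.rowCoeffs p q r i| ≤ α⁻¹ := by
  have hrow : A.submatrix (Function.update p i r) q =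
      (A.submatrix p q).updateRow i fun j => A r (q j) := by
    ext a b
    by_cases ha : a = i <;> simp [ha, updateRow_apply]
  have := h i i r (q i)
  rw [Function.update_eq_self, hrow, det_updateRow_eq_det_mul_vecMul_inv _ hB, abs_mul] at this
  exact le_inv_of_mul_mul_le hα (abs_pos.mpr hB) this

theorem abs_colCoeffs_le (h : IsSwapLocalMax α A p q) (hα : 0 < α)
    (hB : (A.submatrix p q).det ≠ 0) (j : ι) (c : n) : |A.colCoeffs p q j c| ≤ α⁻¹ := by
  have hcol : A.submatrix p (Function.update q j c) =
      (A.submatrix p q).updateCol j fun i => A (p i) c := by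
    ext a b
    by_cases hb : b = j <;> simp [hb]
  have := h j j (p j) c
  rw [Function.update_eq_self, hcol, det_updateCol_eq_det_mul_inv_mulVec _ hB, abs_mul] at this
  exact le_inv_of_mul_mul_le hα (abs_pos.mpr hB) this

theorem abs_schurComplement_mul_abs_inv_le (h : IsSwapLocalMax α A p q) (hα : 0 < α)
    (hB : (A.submatrix p q).det ≠ 0) (r : m) (c : n) (i j : ι) :
    |A.schurComplement p q r c| * |(A.submatrix p q)⁻¹ j i| ≤ 2 * α⁻¹ ^ 2 := by
  by_cases hrc : A.schurComplement p q r c = 0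
  · rw [hrc, abs_zero, zero_mul]; positivity
  have hswap := h i j r c
  rw [← abs_adjugate_submatrix_sumElim, adjugate_submatrix_sumElim_inl_inl _ _ _ hB _ _ hrc,
    abs_mul] at hswap
  have hsum := le_inv_of_mul_mul_le hα (abs_pos.mpr hB) hswap
  have hNM : |A.colCoeffs p q j c * A.rowCoeffs p q r i| ≤ α⁻¹ * α⁻¹ := by
    rw [abs_mul]
    exact mul_le_mul (h.abs_colCoeffs_le hα hB j c) (h.abs_rowCoeffs_le hα hB r i)
      (abs_nonneg _) (inv_nonneg.mpr hα.le)
  have hα1 : α⁻¹ ≤ α⁻¹ ^ 2 := by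
    rw [sq]
    exact le_mul_of_one_le_left (inv_nonneg.mpr hα.le) ((one_le_inv₀ hα).mpr (h.le_one hB i))
  have htri := abs_sub (A.schurComplement p q r c * (A.submatrix p q)⁻¹ j i +
    A.colCoeffs p q j c * A.rowCoeffs p q r i) (A.colCoeffs p q j c * A.rowCoeffs p q r i)
  rw [add_sub_cancel_right, abs_mul] at htri
  linarith

theorem abs_det_submatrix_le [Nonempty ι] (h : IsSwapLocalMax α A p q) (hα : 0 < α)
    (hB : (A.submatrix p q).det ≠ 0) (f : ι → m) (g : ι → n) :
    |(A.submatrix f g).det| ≤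
      (2 * Fintype.card ι)! * (2 / α) ^ (2 * Fintype.card ι) * |(A.submatrix p q).det| := by
  obtain ⟨⟨j₀, i₀⟩, -, hmax⟩ := exists_max_image univ
    (fun x : ι × ι => |(A.submatrix p q)⁻¹ x.1 x.2|) univ_nonempty
  have hβ : 0 < |(A.submatrix p q)⁻¹ j₀ i₀| := by
    by_contra! h0
    have hinv : (A.submatrix p q)⁻¹ = 0 := by
      ext a b
      exact abs_nonpos_iff.mp ((hmax (a, b) (mem_univ _)).trans h0)
    simpa [hinv] using nonsing_inv_mul _ hB.isUnit
  have hinv_le : α⁻¹ ≤ 2 / α := by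
    rw [div_eq_mul_inv]; linarith [inv_pos.mpr hα]
  have hH := abs_det_fromBlocks_le (A.submatrix p q)⁻¹ ((A.colCoeffs p q).submatrix id g)
    (-(A.rowCoeffs p q).submatrix f id) ((A.schurComplement p q).submatrix f g) hβ
    (div_pos two_pos hα) (fun a b => hmax (a, b) (mem_univ _))
    (fun a b => (h.abs_colCoeffs_le hα hB a (g b)).trans hinv_le)
    (fun a b => by simpa using (h.abs_rowCoeffs_le hα hB (f a) b).trans hinv_le)
    (fun a b => by
      have := h.abs_schurComplement_mul_abs_inv_le hα hB (f a) (g b) i₀ j₀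
      rw [submatrix_apply, div_pow, div_eq_mul_inv, ← inv_pow]
      linarith [sq_nonneg α⁻¹])
  have hdet := det_fromBlocks_inv_mul_det (A.submatrix p q) hB ((A.rowCoeffs p q).submatrix f id)
    ((A.colCoeffs p q).submatrix id g) ((A.schurComplement p q).submatrix f g)
  rw [← submatrix_eq_schurComplement_add_mul A p q hB f g] at hdet
  rw [← hdet, abs_mul]
  exact mul_le_mul_of_nonneg_right hH (abs_nonneg _)

end IsSwapLocalMax

end SwapLocalMax

theorem abs_det_submatrix_eq_abs_subdet {k m n : ℕ} (A : Matrix (Fin m) (Fin n) ℝ)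
    {f : Fin k → Fin m} {g : Fin k → Fin n} (hf : Function.Injective f)
    (hg : Function.Injective g) :
    |(A.submatrix f g).det| = |subdet A (univ.image f) (univ.image g)| := by
  have hR : #(univ.image f) = k := by rw [card_image_of_injective _ hf, card_fin]
  have hC : #(univ.image g) = #(univ.image f) := by
    rw [card_image_of_injective _ hg, card_fin, hR]
  rw [subdet, dif_pos hC.symm]
  obtain ⟨e₁, he₁⟩ := hf.exists_equiv_eq_comp_of_range_eq
    ((univ.image f).orderEmbOfFin rfl).injective
    (by rw [range_orderEmbOfFin, coe_image, coe_univ, Set.image_univ])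
  obtain ⟨e₂, he₂⟩ := hg.exists_equiv_eq_comp_of_range_eq
    ((univ.image g).orderEmbOfFin hC).injective
    (by rw [range_orderEmbOfFin, coe_image, coe_univ, Set.image_univ])
  calc |(A.submatrix f g).det| = |((A.submatrix _ _).submatrix e₁ e₂).det| := by
        rw [submatrix_submatrix, ← he₁, ← he₂]
    _ = _ := abs_det_submatrix_equiv_equiv _ _ _

theorem abs_subdet_eq_abs_det_orderEmbOfFin {k m n : ℕ} (A : Matrix (Fin m) (Fin n) ℝ)
    {R : Finset (Fin m)} {C : Finset (Fin n)} (hR : R.card = k) (hC : C.card = k) :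
    |subdet A R C| = |(A.submatrix (R.orderEmbOfFin hR) (C.orderEmbOfFin hC)).det| := by
  rw [abs_det_submatrix_eq_abs_subdet A (R.orderEmbOfFin hR).injective
    (C.orderEmbOfFin hC).injective, image_orderEmbOfFin_univ, image_orderEmbOfFin_univ]

theorem isSwapLocalMax_orderEmbOfFin {k m n : ℕ} (A : Matrix (Fin m) (Fin n) ℝ) (α : ℝ)
    (SR : Finset (Fin m)) (SC : Finset (Fin n)) (hSR : SR.card = k) (hSC : SC.card = k)
    (hloc : ∀ (TR : Finset (Fin m)) (TC : Finset (Fin n)), TR.card = k → TC.card = k →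
      (symmDiff SR TR).card + (symmDiff SC TC).card ≤ 2 * 2 →
      α * |subdet A TR TC| ≤ |subdet A SR SC|) :
    IsSwapLocalMax α A (SR.orderEmbOfFin hSR) (SC.orderEmbOfFin hSC) := by
  intro i j r c
  rw [← abs_subdet_eq_abs_det_orderEmbOfFin]
  by_cases hfg : (Function.update (SR.orderEmbOfFin hSR) i r).Injective ∧
      (Function.update (SC.orderEmbOfFin hSC) j c).Injective
  · rw [abs_det_submatrix_eq_abs_subdet A hfg.1 hfg.2]
    have hR := card_symmDiff_image_update_le (SR.orderEmbOfFin hSR) i r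
    have hC := card_symmDiff_image_update_le (SC.orderEmbOfFin hSC) j c
    rw [image_orderEmbOfFin_univ] at hR hC
    exact hloc _ _ (by rw [card_image_of_injective _ hfg.1, card_fin])
      (by rw [card_image_of_injective _ hfg.2, card_fin]) (by omega)
  · rw [det_submatrix_eq_zero_of_not_injective A hfg, abs_zero, mul_zero]
    exact abs_nonneg _

theorem factorial_mul_two_div_pow_le (k : ℕ) {α : ℝ} (hα : 0 < α) :
    ((2 * k)! : ℝ) * (2 / α) ^ (2 * k) ≤ ((2 * (k : ℝ) ^ 2 + 8 * k) / α) ^ (2 * k) := by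
  calc ((2 * k)! : ℝ) * (2 / α) ^ (2 * k) ≤ ((2 * k : ℕ) : ℝ) ^ (2 * k) * (2 / α) ^ (2 * k) := by
        gcongr; exact_mod_cast Nat.factorial_le_pow _
    _ = (4 * k / α) ^ (2 * k) := by rw [← mul_pow]; push_cast; ring_nf
    _ ≤ ((2 * (k : ℝ) ^ 2 + 8 * k) / α) ^ (2 * k) := by gcongr; nlinarith [k.cast_nonneg (α := ℝ)]

theorem local_to_global_general {k m n : ℕ} (hk : 1 ≤ k)
    (A : Matrix (Fin m) (Fin n) ℝ) (α : ℝ) (hα : 0 < α)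
    (SR : Finset (Fin m)) (SC : Finset (Fin n))
    (hSR : SR.card = k) (hSC : SC.card = k)
    (hS0 : subdet A SR SC ≠ 0)
    (hloc : ∀ (TR : Finset (Fin m)) (TC : Finset (Fin n)),
      TR.card = k → TC.card = k →
      (symmDiff SR TR).card + (symmDiff SC TC).card ≤ 2 * 2 →
      α * |subdet A TR TC| ≤ |subdet A SR SC|) :
    (∀ (LR : Finset (Fin m)) (LC : Finset (Fin n)), LR.card = k → LC.card = k →
      |subdet A LR LC| ≤ ((2 * (k : ℝ) ^ 2 + 8 * k) / α) ^ (2 * k) * |subdet A SR SC|)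
    ∧ ((2 * (k : ℝ) ^ 2 + 8 * k) / α) ^ (2 * k) * |subdet A SR SC| ≥ maxdet k A := by
  have : Nonempty (Fin k) := ⟨⟨0, hk⟩⟩
  have hS := abs_subdet_eq_abs_det_orderEmbOfFin A hSR hSC
  have hB : (A.submatrix (SR.orderEmbOfFin hSR) (SC.orderEmbOfFin hSC)).det ≠ 0 :=
    abs_pos.mp (hS ▸ abs_pos.mpr hS0)
  have hbound : ∀ (LR : Finset (Fin m)) (LC : Finset (Fin n)), LR.card = k → LC.card = k →
      |subdet A LR LC| ≤ ((2 * (k : ℝ) ^ 2 + 8 * k) / α) ^ (2 * k) * |subdet A SR SC| := by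
    intro LR LC hLR hLC
    rw [abs_subdet_eq_abs_det_orderEmbOfFin A hLR hLC, hS]
    refine ((isSwapLocalMax_orderEmbOfFin A α SR SC hSR hSC hloc).abs_det_submatrix_le hα hB
      _ _).trans ?_
    rw [Fintype.card_fin]
    exact mul_le_mul_of_nonneg_right (factorial_mul_two_div_pow_le k hα) (abs_nonneg _)
  refine ⟨hbound, Real.sSup_le ?_ (by positivity)⟩
  rintro x ⟨R, C, hR, hC, rfl⟩
  exact hbound R C hR hC

/-- **Local to global optimality** (Lemma 3.3, with the explicit constant `2k² + 8k`):
if `S` is a `(2, α)`-local maximum with `det A_S ≠ 0`, then every `k × k` submatrix `L`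
satisfies `|det A_L| ≤ ((2k² + 8k)/α)^(2k) * |det A_S|`; in particular
`((2k² + 8k)/α)^(2k) * |det A_S| ≥ maxdet_k(A)`.
Here `d(S,T) ≤ 2` is expressed as `|S_R Δ T_R| + |S_C Δ T_C| ≤ 2 * 2`. -/
theorem local_to_global {k m n : ℕ} (hk : 1 ≤ k) (hm : k ≤ m) (hn : k ≤ n)
    (A : Matrix (Fin m) (Fin n) ℝ) (α : ℝ) (hα : 0 < α)
    (SR : Finset (Fin m)) (SC : Finset (Fin n))
    (hSR : SR.card = k) (hSC : SC.card = k)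
    (hS0 : subdet A SR SC ≠ 0)
    (hloc : ∀ (TR : Finset (Fin m)) (TC : Finset (Fin n)),
      TR.card = k → TC.card = k →
      (symmDiff SR TR).card + (symmDiff SC TC).card ≤ 2 * 2 →
      α * |subdet A TR TC| ≤ |subdet A SR SC|) :
    (∀ (LR : Finset (Fin m)) (LC : Finset (Fin n)), LR.card = k → LC.card = k →
      |subdet A LR LC| ≤ ((2 * (k : ℝ) ^ 2 + 8 * k) / α) ^ (2 * k) * |subdet A SR SC|)
    ∧ ((2 * (k : ℝ) ^ 2 + 8 * k) / α) ^ (2 * k) * |subdet A SR SC| ≥ maxdet k A :=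
  local_to_global_general hk A α hα SR SC hSR hSC hS0 hloc
end

section
/- (Exchange inequality from the classical Plücker relation, maximal case k = m.) Let A ∈ ℝ^{m×n} with m ≤ n, and let S, T ⊆ {1,…,n} with |S| = |T| = m and S ≠ T. Then |det(A_{[m],S})| · |det(A_{[m],T})| ≤ m · max { |det(A_{[m], S Δ {i,j}})| · |det(A_{[m], T Δ {i,j}})| : i ∈ S \ T, j ∈ T \ S }. -/
open Finset

/-- The determinant of the maximal (`m × m`) submatrix of `A : ℝ^{m×n}` using all rows
and the columns in `S` (in increasing order); junk value `0` if `S.card ≠ m`. -/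
noncomputable def colsDet {m n : ℕ} (A : Matrix (Fin m) (Fin n) ℝ)
    (S : Finset (Fin n)) : ℝ :=
  if h : S.card = m then (A.submatrix id (S.orderEmbOfFin h)).det else 0

/-- Linearity of the determinant in one column, for a linear combination of arbitrary vectors. -/
lemma det_updateCol_linear_comb {m : ℕ} (M : Matrix (Fin m) (Fin m) ℝ) (j : Fin m)
    (s : Finset (Fin m)) (c : Fin m → ℝ) (u : Fin m → Fin m → ℝ) :
    (M.updateCol j (∑ k ∈ s, c k • u k)).det
      = ∑ k ∈ s, c k * (M.updateCol j (u k)).det := by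
  induction s using Finset.induction_on with
  | empty =>
      simp only [Finset.sum_empty]
      exact Matrix.det_eq_zero_of_column_eq_zero j (by simp [Matrix.updateCol_apply])
  | @insert a s ha ih =>
      rw [Finset.sum_insert ha, Matrix.det_updateCol_add, Matrix.det_updateCol_smul,
        ih, Finset.sum_insert ha]

/-- Sylvester's exchange identity (the classical Plücker relation, maximal case). -/
lemma sylvester_exchange {m : ℕ} (V W : Matrix (Fin m) (Fin m) ℝ) (i₀ : Fin m) :
    W.det * V.det = ∑ k, (W.updateCol k (fun r => V r i₀)).det
      * (V.updateCol i₀ (fun r => W r k)).det := by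
  have h1 : (W.det • fun r => V r i₀)
      = ∑ k, (Matrix.cramer W (fun r => V r i₀)) k • (fun r => W r k) := by
    rw [← Matrix.mulVec_cramer W (fun r => V r i₀)]
    funext r
    simp [Matrix.mulVec, dotProduct, mul_comm]
  calc W.det * V.det
      = (V.updateCol i₀ (W.det • fun r => V r i₀)).det := by
        rw [Matrix.det_updateCol_smul, Matrix.updateCol_eq_self]
    _ = ∑ k, (Matrix.cramer W (fun r => V r i₀)) k
          * (V.updateCol i₀ (fun r => W r k)).det := by
        rw [h1, det_updateCol_linear_comb]
    _ = ∑ k, (W.updateCol k (fun r => V r i₀)).det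
          * (V.updateCol i₀ (fun r => W r k)).det := by
        simp [Matrix.cramer_apply]

/-- If `g : Fin m → Fin n` is injective with values in a set `S` of cardinality `m`, then
the absolute value of the determinant of the corresponding column-submatrix equals
`|colsDet A S|`. -/
lemma abs_det_submatrix_eq_colsDet {m n : ℕ} (A : Matrix (Fin m) (Fin n) ℝ)
    (g : Fin m → Fin n) (hg : Function.Injective g) (S : Finset (Fin n)) (hS : S.card = m)
    (him : ∀ k, g k ∈ S) :
    |(A.submatrix id g).det| = |colsDet A S| := by
  classical
  let e : Fin m → Fin m := fun k => (S.orderIsoOfFin hS).symm ⟨g k, him k⟩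
  have he : Function.Injective e := by
    intro a b hab
    apply hg
    have := congrArg (S.orderIsoOfFin hS) hab
    simpa [e, Subtype.ext_iff] using this
  let p : Equiv.Perm (Fin m) := Equiv.ofBijective e (Finite.injective_iff_bijective.mp he)
  have hcomp : ∀ k, S.orderEmbOfFin hS (p k) = g k := by
    intro k
    have h2 : (S.orderIsoOfFin hS) (e k) = ⟨g k, him k⟩ :=
      (S.orderIsoOfFin hS).apply_symm_apply _
    have h3 : ((S.orderIsoOfFin hS) (e k) : Fin n) = g k := by rw [h2]
    rw [← Finset.coe_orderIsoOfFin_apply] at *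
    exact h3
  have hsub : A.submatrix id g = (A.submatrix id (S.orderEmbOfFin hS)).submatrix id p := by
    ext r k
    simp [hcomp k]
  rw [hsub, Matrix.det_permute', abs_mul, abs_unit_intCast, one_mul, colsDet, dif_pos hS]

/-- **Exchange inequality from the classical Plücker relation** (maximal case `k = m`):
for column sets `S ≠ T` of size `m`, there are `i ∈ S \ T` and `j ∈ T \ S` with
`|det A_{[m],S}| * |det A_{[m],T}| ≤ m * |det A_{[m], S Δ {i,j}}| * |det A_{[m], T Δ {i,j}}|`. -/
theorem maximal_exchange {m n : ℕ} (hmn : m ≤ n) (A : Matrix (Fin m) (Fin n) ℝ)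
    (S T : Finset (Fin n)) (hS : S.card = m) (hT : T.card = m) (hne : S ≠ T) :
    ∃ i ∈ S \ T, ∃ j ∈ T \ S,
      |colsDet A S| * |colsDet A T| ≤
        (m : ℝ) * (|colsDet A (symmDiff S {i, j})| * |colsDet A (symmDiff T {i, j})|) := by
  classical
  have hST : (S \ T).Nonempty := by
    rw [Finset.sdiff_nonempty]
    intro hsub
    exact hne (Finset.eq_of_subset_of_card_le hsub (le_of_eq (hT.trans hS.symm)))
  have hTS : (T \ S).Nonempty := by
    rw [Finset.sdiff_nonempty]
    intro hsub
    exact hne.symm (Finset.eq_of_subset_of_card_le hsub (le_of_eq (hS.trans hT.symm)))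
  obtain ⟨i, hi⟩ := hST
  have hiS : i ∈ S := (Finset.mem_sdiff.mp hi).1
  have hiT : i ∉ T := (Finset.mem_sdiff.mp hi).2
  set σ := S.orderEmbOfFin hS with hσ
  set τ := T.orderEmbOfFin hT with hτ
  have hσinj : Function.Injective σ := σ.injective
  have hτinj : Function.Injective τ := τ.injective
  obtain ⟨i₀, hi₀⟩ : ∃ i₀, σ i₀ = i := by
    have h := Finset.range_orderEmbOfFin S hS
    have : i ∈ Set.range σ := by rw [hσ, h]; exact Finset.mem_coe.mpr hiS
    exact this
  set V := A.submatrix id σ with hV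
  set W := A.submatrix id τ with hW
  -- the exchange terms
  set f : Fin m → ℝ := fun k => |(W.updateCol k (fun r => V r i₀)).det|
      * |(V.updateCol i₀ (fun r => W r k)).det| with hf
  have hfnonneg : ∀ k, 0 ≤ f k := fun k => mul_nonneg (abs_nonneg _) (abs_nonneg _)
  -- the candidate indices
  set P : Finset (Fin m) := Finset.univ.filter (fun k => τ k ∉ S) with hP
  have hPne : P.Nonempty := by
    obtain ⟨j, hj⟩ := hTS
    have hjT : j ∈ T := (Finset.mem_sdiff.mp hj).1
    have hjS : j ∉ S := (Finset.mem_sdiff.mp hj).2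
    obtain ⟨k, hk⟩ : ∃ k, τ k = j := by
      have h := Finset.range_orderEmbOfFin T hT
      have : j ∈ Set.range τ := by rw [hτ, h]; exact Finset.mem_coe.mpr hjT
      exact this
    exact ⟨k, Finset.mem_filter.mpr ⟨Finset.mem_univ _, by rw [hk]; exact hjS⟩⟩
  obtain ⟨kmax, hkmaxP, hkmax⟩ := P.exists_max_image f hPne
  set j := τ kmax with hj
  have hjS : j ∉ S := (Finset.mem_filter.mp hkmaxP).2
  have hjT : j ∈ T := Finset.orderEmbOfFin_mem T hT kmax
  have hij : i ≠ j := fun h => hjS (h ▸ hiS)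
  refine ⟨i, Finset.mem_sdiff.mpr ⟨hiS, hiT⟩, j, Finset.mem_sdiff.mpr ⟨hjT, hjS⟩, ?_⟩
  have hm1 : 1 ≤ m := by
    rw [← hS]
    exact Finset.card_pos.mpr ⟨i, hiS⟩
  -- description of the symmetric differences
  have hSsd : symmDiff S {i, j} = insert j (S.erase i) := by
    ext x
    simp only [Finset.mem_symmDiff, Finset.mem_insert, Finset.mem_erase,
      Finset.mem_singleton]
    constructor
    · rintro (⟨hxS, hx⟩ | ⟨hx, hxS⟩)
      · exact Or.inr ⟨fun h => hx (Or.inl h), hxS⟩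
      · rcases hx with h | h
        · exact absurd (h ▸ hiS) hxS
        · exact Or.inl h
    · rintro (rfl | ⟨hxi, hxS⟩)
      · exact Or.inr ⟨Or.inr rfl, hjS⟩
      · exact Or.inl ⟨hxS, by rintro (h | h); exact hxi h; exact hjS (h ▸ hxS)⟩
  have hTsd : symmDiff T {i, j} = insert i (T.erase j) := by
    ext x
    simp only [Finset.mem_symmDiff, Finset.mem_insert, Finset.mem_erase,
      Finset.mem_singleton]
    constructor
    · rintro (⟨hxT, hx⟩ | ⟨hx, hxT⟩)
      · exact Or.inr ⟨fun h => hx (Or.inr h), hxT⟩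
      · rcases hx with h | h
        · exact Or.inl h
        · exact absurd (h ▸ hjT) hxT
    · rintro (rfl | ⟨hxj, hxT⟩)
      · exact Or.inr ⟨Or.inl rfl, hiT⟩
      · exact Or.inl ⟨hxT, by rintro (h | h); exact hiT (h ▸ hxT); exact hxj h⟩
  have hSsdcard : (symmDiff S {i, j}).card = m := by
    rw [hSsd, Finset.card_insert_of_notMem (fun h => hjS (Finset.mem_of_mem_erase h)),
      Finset.card_erase_of_mem hiS, hS]
    omega
  have hTsdcard : (symmDiff T {i, j}).card = m := by
    rw [hTsd, Finset.card_insert_of_notMem (fun h => hiT (Finset.mem_of_mem_erase h)),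
      Finset.card_erase_of_mem hjT, hT]
    omega
  -- identify the two maximal exchange determinants
  have hVmax : |(V.updateCol i₀ (fun r => W r kmax)).det|
      = |colsDet A (symmDiff S {i, j})| := by
    have heq : V.updateCol i₀ (fun r => W r kmax)
        = A.submatrix id (Function.update σ i₀ j) := by
      ext r l
      by_cases hl : l = i₀ <;>
        simp [Matrix.updateCol_apply, Function.update_apply, hl, hV, hW, hj]
    rw [heq]
    apply abs_det_submatrix_eq_colsDet
    · intro a b hab
      simp only [Function.update_apply] at hab
      by_cases ha : a = i₀ <;> by_cases hb : b = i₀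
      · rw [ha, hb]
      · rw [if_pos ha, if_neg hb] at hab
        exact absurd (hab ▸ Finset.orderEmbOfFin_mem S hS b) hjS
      · rw [if_neg ha, if_pos hb] at hab
        exact absurd (hab ▸ Finset.orderEmbOfFin_mem S hS a) hjS
      · rw [if_neg ha, if_neg hb] at hab
        exact hσinj hab
    · exact hSsdcard
    · intro k
      rw [hSsd]
      by_cases hk : k = i₀
      · rw [hk, Function.update_self]
        exact Finset.mem_insert_self _ _
      · rw [Function.update_of_ne hk]
        refine Finset.mem_insert_of_mem (Finset.mem_erase.mpr ⟨?_, Finset.orderEmbOfFin_mem S hS k⟩)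
        intro h
        exact hk (hσinj (h.trans hi₀.symm))
  have hWmax : |(W.updateCol kmax (fun r => V r i₀)).det|
      = |colsDet A (symmDiff T {i, j})| := by
    have heq : W.updateCol kmax (fun r => V r i₀)
        = A.submatrix id (Function.update τ kmax i) := by
      ext r l
      by_cases hl : l = kmax <;>
        simp [Matrix.updateCol_apply, Function.update_apply, hl, hV, hW, hi₀]
    rw [heq]
    apply abs_det_submatrix_eq_colsDet
    · intro a b hab
      simp only [Function.update_apply] at hab
      by_cases ha : a = kmax <;> by_cases hb : b = kmax
      · rw [ha, hb]
      · rw [if_pos ha, if_neg hb] at hab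
        exact absurd (hab ▸ Finset.orderEmbOfFin_mem T hT b) hiT
      · rw [if_neg ha, if_pos hb] at hab
        exact absurd (hab ▸ Finset.orderEmbOfFin_mem T hT a) hiT
      · rw [if_neg ha, if_neg hb] at hab
        exact hτinj hab
    · exact hTsdcard
    · intro k
      rw [hTsd]
      by_cases hk : k = kmax
      · rw [hk, Function.update_self]
        exact Finset.mem_insert_self _ _
      · rw [Function.update_of_ne hk]
        refine Finset.mem_insert_of_mem (Finset.mem_erase.mpr ⟨?_, Finset.orderEmbOfFin_mem T hT k⟩)
        intro h
        exact hk (hτinj h)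
  -- every term of the Sylvester sum is at most `f kmax`
  have hterm : ∀ k : Fin m, |(W.updateCol k (fun r => V r i₀)).det
      * (V.updateCol i₀ (fun r => W r k)).det| ≤ f kmax := by
    intro k
    rw [abs_mul]
    by_cases hk : τ k ∈ S
    · have hzero : (V.updateCol i₀ (fun r => W r k)).det = 0 := by
        obtain ⟨k₁, hk₁⟩ : ∃ k₁, σ k₁ = τ k := by
          have h := Finset.range_orderEmbOfFin S hS
          have : τ k ∈ Set.range σ := by rw [hσ, h]; exact Finset.mem_coe.mpr hk
          exact this
        have hk₁ne : k₁ ≠ i₀ := by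
          intro h
          rw [h, hi₀] at hk₁
          exact hiT (hk₁ ▸ Finset.orderEmbOfFin_mem T hT k)
        apply Matrix.det_zero_of_column_eq hk₁ne
        intro r
        rw [Matrix.updateCol_apply, Matrix.updateCol_apply,
          if_neg hk₁ne, if_pos rfl]
        simp [hV, hW, hk₁]
      rw [hzero, abs_zero, mul_zero]
      exact hfnonneg kmax
    · exact hkmax k (Finset.mem_filter.mpr ⟨Finset.mem_univ _, hk⟩)
  -- put everything together
  have hcdS : colsDet A S = V.det := by rw [colsDet, dif_pos hS]
  have hcdT : colsDet A T = W.det := by rw [colsDet, dif_pos hT]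
  calc |colsDet A S| * |colsDet A T|
      = |W.det * V.det| := by rw [hcdS, hcdT, abs_mul, mul_comm]
    _ = |∑ k, (W.updateCol k (fun r => V r i₀)).det
          * (V.updateCol i₀ (fun r => W r k)).det| := by
        rw [sylvester_exchange V W i₀]
    _ ≤ ∑ k, |(W.updateCol k (fun r => V r i₀)).det
          * (V.updateCol i₀ (fun r => W r k)).det| := Finset.abs_sum_le_sum_abs _ _
    _ ≤ ∑ _k : Fin m, f kmax := Finset.sum_le_sum (fun k _ => hterm k)
    _ = (m : ℝ) * f kmax := by
        rw [Finset.sum_const, Finset.card_univ, Fintype.card_fin, nsmul_eq_mul]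
    _ = (m : ℝ) * (|colsDet A (symmDiff S {i, j})| * |colsDet A (symmDiff T {i, j})|) := by
        rw [hf]
        dsimp only
        rw [hWmax, hVmax]
        ring
end

section
/- (Classical Plücker relation, maximal case k = m, with signs.) Let A ∈ ℝ^{m×n} with m ≤ n, let S, T ⊆ {1,…,n} with |S| = |T| = m, and fix j ∈ T \ S. Then there exist signs ε : S \ T → {−1, +1} such that det(A_{[m],S}) · det(A_{[m],T}) = Σ_{i ∈ S \ T} ε(i) · det(A_{[m], S Δ {i,j}}) · det(A_{[m], T Δ {i,j}}). -/
open Finset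

/-!
Let `s`, `t` enumerate `S`, `T` increasingly and let `t ℓ = j`. Expanding through Cramer's rule,
`det B * det C = ∑ₖ det (B with column k replaced by column ℓ of C) *
det (C with column ℓ replaced by column k of B)`.
For `B = A_S`, `C = A_T` the `k`-th term vanishes when `s k ∈ T` (a repeated column), and
otherwise its two column families are `swap (s k) j ∘ s` and `swap (s k) j ∘ t`, which enumerate
`S Δ {s k, j}` and `T Δ {s k, j}` up to the sign of their sorting permutations.
-/

open Function Equiv

namespace Matrix

variable {o ι R : Type*} [DecidableEq o]

theorem submatrix_update_eq_updateCol (A : Matrix o ι R) (f : o → ι) (k : o) (x : ι) :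
    A.submatrix id (update f k x) = (A.submatrix id f).updateCol k (fun i => A i x) := by
  ext i l
  by_cases h : l = k
  · subst h; simp
  · simp [h]

variable [Fintype o] [CommRing R]

theorem det_mul_det_eq_sum_det_updateCol_mul_det_updateCol (B C : Matrix o o R) (ℓ : o) :
    B.det * C.det =
      ∑ k, (B.updateCol k (fun i => C i ℓ)).det * (C.updateCol ℓ (fun i => B i k)).det := by
  set c : o → R := fun i => C i ℓ
  calc B.det * C.det = cramer C (B *ᵥ cramer B c) ℓ := by
        rw [mulVec_cramer, map_smul, Pi.smul_apply, smul_eq_mul, cramer_apply,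
          updateCol_eq_self]
    _ = ∑ k, cramer B c k * cramer C (fun i => B i k) ℓ := by
        have hcols : B *ᵥ cramer B c = ∑ k, cramer B c k • fun i => B i k := by
          ext i
          simp [mulVec, dotProduct, mul_comm]
        simp only [hcols, map_sum, map_smul, Finset.sum_apply, Pi.smul_apply, smul_eq_mul]
    _ = _ := by simp only [cramer_apply]

theorem det_submatrix_mul_det_submatrix_eq_sum_update (A : Matrix o ι R) (f g : o → ι)
    (ℓ : o) :
    (A.submatrix id f).det * (A.submatrix id g).det =
      ∑ k, (A.submatrix id (update f k (g ℓ))).det *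
        (A.submatrix id (update g ℓ (f k))).det := by
  simp only [submatrix_update_eq_updateCol]
  exact det_mul_det_eq_sum_det_updateCol_mul_det_updateCol _ _ ℓ

theorem det_submatrix_update_apply_eq_zero (A : Matrix o ι R) (g : o → ι) {ℓ p : o}
    (hpℓ : p ≠ ℓ) : (A.submatrix id (update g ℓ (g p))).det = 0 :=
  det_zero_of_column_eq hpℓ.symm fun i => by simp [hpℓ]

end Matrix

theorem Equiv.swap_comp_eq_update {α β : Type*} [DecidableEq α] [DecidableEq β] {f : α → β}
    (hf : Injective f) (a : α) {b : β} (hb : ∀ x, f x ≠ b) :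
    swap (f a) b ∘ f = update f a b := by
  funext x
  by_cases h : x = a
  · subst h; simp
  · simp [h, swap_apply_of_ne_of_ne (hf.ne h) (hb x)]

theorem Finset.image_swap_eq_symmDiff {α : Type*} [DecidableEq α] {S : Finset α} {i j : α}
    (hi : i ∈ S) (hj : j ∉ S) : S.image (swap i j) = symmDiff S {i, j} := by
  ext x
  simp only [mem_image, mem_symmDiff, mem_insert, mem_singleton]
  constructor
  · rintro ⟨y, hy, rfl⟩
    by_cases hyi : y = i
    · subst hyi; simp [hj]
    · have hyj : y ≠ j := by rintro rfl; exact hj hy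
      simp [swap_apply_of_ne_of_ne hyi hyj, hy, hyi, hyj]
  · rintro (⟨hx, hxij⟩ | ⟨rfl | rfl, hx⟩)
    · exact ⟨x, hx, swap_apply_of_ne_of_ne (fun h => hxij (Or.inl h)) fun h => hxij (Or.inr h)⟩
    · exact absurd hi hx
    · exact ⟨i, hi, swap_apply_left _ _⟩

section colsDet

variable {m n : ℕ} (A : Matrix (Fin m) (Fin n) ℝ)

theorem colsDet_eq_det {S : Finset (Fin n)} (hS : S.card = m) :
    colsDet A S = (A.submatrix id (S.orderEmbOfFin hS)).det :=
  dif_pos hS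

theorem det_submatrix_eq_sign_sort_mul_colsDet {f : Fin m → Fin n} (hf : Injective f) :
    (A.submatrix id f).det = Perm.sign (Tuple.sort f) * colsDet A (Finset.univ.image f) := by
  have hcard : (Finset.univ.image f).card = m := by
    rw [Finset.card_image_of_injective _ hf, Finset.card_univ, Fintype.card_fin]
  have hsorted : f ∘ Tuple.sort f = (Finset.univ.image f).orderEmbOfFin hcard :=
    Finset.orderEmbOfFin_unique hcard (fun k => Finset.mem_image_of_mem f (Finset.mem_univ _))
      ((Tuple.monotone_sort f).strictMono_of_injective (hf.comp (Tuple.sort f).injective))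
  rw [colsDet_eq_det A hcard, ← hsorted, ← Perm.sign_inv, ← Matrix.det_permute']
  congr 2
  ext k
  simp

theorem det_submatrix_swap_comp_orderEmbOfFin {S : Finset (Fin n)} (hS : S.card = m)
    {i j : Fin n} (hi : i ∈ S) (hj : j ∉ S) :
    (A.submatrix id (swap i j ∘ S.orderEmbOfFin hS)).det =
      Perm.sign (Tuple.sort (swap i j ∘ S.orderEmbOfFin hS)) * colsDet A (symmDiff S {i, j}) := by
  have hinj : Injective (swap i j ∘ S.orderEmbOfFin hS) :=
    (swap i j).injective.comp (S.orderEmbOfFin hS).injective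
  rw [det_submatrix_eq_sign_sort_mul_colsDet A hinj, ← Finset.image_image,
    Finset.image_orderEmbOfFin_univ, Finset.image_swap_eq_symmDiff hi hj]

theorem colsDet_mul_colsDet_eq_sum_swap {S T : Finset (Fin n)} (hS : S.card = m)
    (hT : T.card = m) {j : Fin n} (hj : j ∈ T \ S) :
    colsDet A S * colsDet A T =
      ∑ i ∈ S \ T, (A.submatrix id (swap i j ∘ S.orderEmbOfFin hS)).det *
        (A.submatrix id (swap i j ∘ T.orderEmbOfFin hT)).det := by
  obtain ⟨hjT, hjS⟩ := Finset.mem_sdiff.mp hj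
  set s := S.orderEmbOfFin hS
  set t := T.orderEmbOfFin hT
  obtain ⟨ℓ, rfl⟩ : j ∈ Set.range t := by rwa [Finset.range_orderEmbOfFin]
  let term : Fin n → ℝ := fun i =>
    (A.submatrix id (swap i (t ℓ) ∘ s)).det * (A.submatrix id (swap i (t ℓ) ∘ t)).det
  calc colsDet A S * colsDet A T
      = ∑ k, (A.submatrix id (update s k (t ℓ))).det *
          (A.submatrix id (update t ℓ (s k))).det := by
        rw [colsDet_eq_det A hS, colsDet_eq_det A hT]
        exact Matrix.det_submatrix_mul_det_submatrix_eq_sum_update A s t ℓ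
    _ = ∑ k, if s k ∉ T then term (s k) else 0 := by
        refine Finset.sum_congr rfl fun k _ => ?_
        by_cases hkT : s k ∈ T
        · rw [if_neg (not_not_intro hkT)]
          obtain ⟨p, hp⟩ : s k ∈ Set.range t := by rwa [Finset.range_orderEmbOfFin]
          have hpℓ : p ≠ ℓ := by
            rintro rfl
            exact hjS (hp ▸ Finset.orderEmbOfFin_mem S hS k)
          rw [← hp, Matrix.det_submatrix_update_apply_eq_zero A t hpℓ, mul_zero]
        · rw [if_pos hkT]
          have hs : ∀ x, s x ≠ t ℓ := fun x hx => hjS (hx ▸ Finset.orderEmbOfFin_mem S hS x)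
          have ht : ∀ x, t x ≠ s k := fun x hx => hkT (hx ▸ Finset.orderEmbOfFin_mem T hT x)
          rw [← swap_comp_eq_update s.injective k hs, swap_comm,
            ← swap_comp_eq_update t.injective ℓ ht, swap_comm]
    _ = ∑ i ∈ S \ T, term i := by
        rw [Finset.sdiff_eq_filter, Finset.sum_filter, ← Finset.map_orderEmbOfFin_univ S hS,
          Finset.sum_map]
        rfl

end colsDet

theorem plucker_maximal_general {m n : ℕ} (A : Matrix (Fin m) (Fin n) ℝ)
    (S T : Finset (Fin n)) (hS : S.card = m) (hT : T.card = m)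
    (j : Fin n) (hj : j ∈ T \ S) :
    ∃ ε : Fin n → ℝ, (∀ i ∈ S \ T, ε i = 1 ∨ ε i = -1) ∧
      colsDet A S * colsDet A T =
        ∑ i ∈ S \ T, ε i * (colsDet A (symmDiff S {i, j}) * colsDet A (symmDiff T {i, j})) := by
  obtain ⟨hjT, hjS⟩ := Finset.mem_sdiff.mp hj
  set s := S.orderEmbOfFin hS
  set t := T.orderEmbOfFin hT
  let u : Fin n → ℤˣ := fun i =>
    Perm.sign (Tuple.sort (swap i j ∘ s)) * Perm.sign (Tuple.sort (swap i j ∘ t))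
  refine ⟨fun i => u i, fun i _ => ?_, ?_⟩
  · rcases Int.units_eq_one_or (u i) with h | h <;> simp [h]
  · rw [colsDet_mul_colsDet_eq_sum_swap A hS hT hj]
    refine Finset.sum_congr rfl fun i hi => ?_
    obtain ⟨hiS, hiT⟩ := Finset.mem_sdiff.mp hi
    rw [det_submatrix_swap_comp_orderEmbOfFin A hS hiS hjS, swap_comm,
      det_submatrix_swap_comp_orderEmbOfFin A hT hjT hiT, swap_comm, Finset.pair_comm j i]
    push_cast [u]
    ring

/-- **Classical Plücker relation** (maximal case `k = m`, with signs): for column sets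
`S, T` of size `m` and a fixed `j ∈ T \ S`, there exist signs `ε(i) ∈ {−1, +1}` with
`det A_{[m],S} * det A_{[m],T} = Σ_{i ∈ S \ T} ε(i) * det A_{[m], S Δ {i,j}} * det A_{[m], T Δ {i,j}}`. -/
theorem plucker_maximal {m n : ℕ} (hmn : m ≤ n) (A : Matrix (Fin m) (Fin n) ℝ)
    (S T : Finset (Fin n)) (hS : S.card = m) (hT : T.card = m)
    (j : Fin n) (hj : j ∈ T \ S) :
    ∃ ε : Fin n → ℝ, (∀ i ∈ S \ T, ε i = 1 ∨ ε i = -1) ∧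
      colsDet A S * colsDet A T =
        ∑ i ∈ S \ T, ε i * (colsDet A (symmDiff S {i, j}) * colsDet A (symmDiff T {i, j})) :=
  plucker_maximal_general A S T hS hT j hj
end

section
/- (Claim 5.2, vanishing of terms with duplicated rows.) Let k ≥ 1, 0 ≤ r ≤ k, and A ∈ ℝ^{2k×2k} be such that row k+i of A equals row i of A for every i ∈ {1,…,r}. Let S*_R = {1,…,k} and T*_R = {k+1,…,2k}. Let U ⊆ S*_R and U' ⊆ T*_R with |U| = |U'|, and set Ū = U ∪ U'. Let V, W ⊆ {1,…,2k} be column index sets with |V| = |W| = k that partition {1,…,2k}. If there exists i ∈ U ∩ {1,…,r} with k+i ∉ U', or there exists i ∈ {1,…,r} with k+i ∈ U' and i ∉ U, then det(A_{S*_R Δ Ū, V}) · det(A_{T*_R Δ Ū, W}) = 0. -/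
open Finset

lemma subdet_eq_zero_of_dup {m n : ℕ} (A : Matrix (Fin m) (Fin n) ℝ)
    (R : Finset (Fin m)) (C : Finset (Fin n)) {a b : Fin m}
    (ha : a ∈ R) (hb : b ∈ R) (hab : a ≠ b) (hrow : ∀ l, A a l = A b l) :
    subdet A R C = 0 := by
  unfold subdet
  split
  · next h =>
    have hra : a ∈ Set.range (R.orderEmbOfFin rfl) := by
      rw [Finset.range_orderEmbOfFin]; exact ha
    have hrb : b ∈ Set.range (R.orderEmbOfFin rfl) := by
      rw [Finset.range_orderEmbOfFin]; exact hb
    obtain ⟨ia, hia⟩ := hra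
    obtain ⟨ib, hib⟩ := hrb
    apply Matrix.det_zero_of_row_eq (i := ia) (j := ib)
    · rintro rfl
      exact hab (hia.symm.trans hib)
    · funext l
      simp only [Matrix.submatrix_apply, hia, hib]
      exact hrow _
  · rfl

/-- **Claim 5.2** (vanishing of terms with duplicated rows). Indices are 0-based:
`S*_R = {0,…,k−1}`, `T*_R = {k,…,2k−1}`, and row `k + i` of `A` equals row `i`
for every `i ∈ {0,…,r−1}`. If `U ⊆ S*_R`, `U' ⊆ T*_R` have equal cardinality,
`V, W` partition the columns with `|V| = |W| = k`, and either some `i ∈ U` with `i < r`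
has `k + i ∉ U'`, or some element `k + i` of `U'` with `i < r` has `i ∉ U`, then
`det(A_{S*_R Δ (U ∪ U'), V}) * det(A_{T*_R Δ (U ∪ U'), W}) = 0`. -/
theorem vanishing_duplicated_rows {k r : ℕ} (hk : 1 ≤ k) (hr : r ≤ k)
    (A : Matrix (Fin (2 * k)) (Fin (2 * k)) ℝ)
    (hdup : ∀ i j : Fin (2 * k), (i : ℕ) < r → (j : ℕ) = (i : ℕ) + k →
      ∀ l, A j l = A i l)
    (SR TR : Finset (Fin (2 * k)))
    (hSR : ∀ x, x ∈ SR ↔ (x : ℕ) < k)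
    (hTR : ∀ x, x ∈ TR ↔ k ≤ (x : ℕ))
    (U U' : Finset (Fin (2 * k))) (hU : U ⊆ SR) (hU' : U' ⊆ TR)
    (hcard : U.card = U'.card)
    (V W : Finset (Fin (2 * k))) (hV : V.card = k) (hW : W.card = k)
    (hdisj : Disjoint V W) (hcover : V ∪ W = Finset.univ)
    (hbad : (∃ i ∈ U, (i : ℕ) < r ∧ ∀ x ∈ U', (x : ℕ) ≠ (i : ℕ) + k) ∨
      (∃ x ∈ U', (x : ℕ) < k + r ∧ ∀ i ∈ U, (i : ℕ) + k ≠ (x : ℕ))) :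
    subdet A (symmDiff SR (U ∪ U')) V * subdet A (symmDiff TR (U ∪ U')) W = 0 := by
  rcases hbad with ⟨i, hiU, hir, hnot⟩ | ⟨x, hxU', hxlt, hnot⟩
  · -- second factor zero: rows i and k+i both in TR Δ (U ∪ U')
    have hik : (i : ℕ) < k := (hSR i).mp (hU hiU)
    have hjlt : (i : ℕ) + k < 2 * k := by omega
    set j : Fin (2 * k) := ⟨(i : ℕ) + k, hjlt⟩ with hj
    have hiS : i ∈ symmDiff TR (U ∪ U') := by
      rw [Finset.mem_symmDiff]
      right
      refine ⟨Finset.mem_union_left _ hiU, fun h => ?_⟩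
      have := (hTR i).mp h; omega
    have hjS : j ∈ symmDiff TR (U ∪ U') := by
      rw [Finset.mem_symmDiff]
      left
      refine ⟨(hTR j).mpr (by show k ≤ (i:ℕ) + k; omega), fun h => ?_⟩
      rcases Finset.mem_union.mp h with h | h
      · have := (hSR j).mp (hU h); simp only [hj] at this; omega
      · exact hnot _ h rfl
    have hz : subdet A (symmDiff TR (U ∪ U')) W = 0 := by
      refine subdet_eq_zero_of_dup A _ _ hjS hiS (fun h => ?_) (hdup i j hir rfl)
      have : (j : ℕ) = (i : ℕ) := congrArg Fin.val h
      simp only [hj] at this; omega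
    rw [hz, mul_zero]
  · -- first factor zero
    have hxk : k ≤ (x : ℕ) := (hTR x).mp (hU' hxU')
    have hilt : (x : ℕ) - k < 2 * k := by omega
    set i : Fin (2 * k) := ⟨(x : ℕ) - k, hilt⟩ with hi
    have hir : (i : ℕ) < r := by show (x : ℕ) - k < r; omega
    have hxval : (x : ℕ) = (i : ℕ) + k := by show (x:ℕ) = (x:ℕ) - k + k; omega
    have hiS : i ∈ symmDiff SR (U ∪ U') := by
      rw [Finset.mem_symmDiff]
      left
      refine ⟨(hSR i).mpr (by show (x:ℕ) - k < k; omega), fun h => ?_⟩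
      rcases Finset.mem_union.mp h with h | h
      · exact hnot _ h hxval.symm
      · have := (hTR i).mp (hU' h); simp only [hi] at this; omega
    have hxS : x ∈ symmDiff SR (U ∪ U') := by
      rw [Finset.mem_symmDiff]
      right
      refine ⟨Finset.mem_union_right _ hxU', fun h => ?_⟩
      have := (hSR x).mp h; omega
    have hz : subdet A (symmDiff SR (U ∪ U')) V = 0 := by
      refine subdet_eq_zero_of_dup A _ _ hxS hiS (fun h => ?_) (hdup i x hir hxval)
      have : (x : ℕ) = (i : ℕ) := congrArg Fin.val h
      omega
    rw [hz, zero_mul]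
end

section
/- (Remark after Theorem 1.2, local-maximum property of the identity block.) Let k ≥ 1 and 1 ≤ c ≤ k be integers, let H ∈ ℝ^{k×k} be a Hadamard matrix (all entries ±1 and Hᵀ·H = k·I_k), and let A = [I_k | c^{−1/2}·H] ∈ ℝ^{k×2k} (columns 1,…,k form I_k and columns k+1,…,2k form c^{−1/2}·H). Then for every J ⊆ {1,…,2k} with |J| = k and |{1,…,k} Δ J| ≤ 2c, one has |det(A_{[k],J})| ≤ 1 = |det(A_{[k],{1,…,k}})|. In other words, ({1,…,k},{1,…,k}) is a (c,1)-local maximum for k×k subdeterminant maximization on A. -/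
/-!
Order the columns of `J` so that each identity column `e_i` with `i ∈ J` sits in position `i`.
The submatrix is then block triangular with an identity block, so up to sign its determinant
is a `t × t` minor of `c^{-1/2} H`, where `t = |J \ K| ≤ c`. Hadamard's bound
`|det N| ≤ t^{t/2}` for matrices with entries in `[-1, 1]` (AM-GM on the eigenvalues of `NᵀN`)
gives `(t/c)^{t/2} ≤ 1`.
-/

open Finset

open Matrix

theorem Real.prod_le_arith_mean_pow {ι : Type*} [Fintype ι] (z : ι → ℝ)
    (hz : ∀ i, 0 ≤ z i) :
    ∏ i, z i ≤ ((∑ i, z i) / Fintype.card ι) ^ Fintype.card ι := by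
  rcases isEmpty_or_nonempty ι with _ | _
  · simp
  have hcard : (0 : ℝ) < Fintype.card ι := by exact_mod_cast Fintype.card_pos
  have hP : 0 ≤ ∏ i, z i := prod_nonneg fun i _ => hz i
  have amgm := Real.geom_mean_le_arith_mean_weighted univ (fun _ => (Fintype.card ι : ℝ)⁻¹) z
    (fun _ _ => by positivity) (by simp [hcard.ne']) (fun i _ => hz i)
  rw [Real.finsetProd_rpow _ _ fun i _ => hz i, ← mul_sum, inv_mul_eq_div] at amgm
  calc ∏ i, z i = ((∏ i, z i) ^ (Fintype.card ι : ℝ)⁻¹) ^ Fintype.card ι :=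
        (Real.rpow_inv_natCast_pow hP Fintype.card_ne_zero).symm
    _ ≤ _ := by gcongr

theorem Matrix.PosSemidef.det_le_trace_div_card_pow {n : Type*} [Fintype n] [DecidableEq n]
    {G : Matrix n n ℝ} (hG : G.PosSemidef) :
    G.det ≤ (G.trace / Fintype.card n) ^ Fintype.card n := by
  rw [hG.1.det_eq_prod_eigenvalues, hG.1.trace_eq_sum_eigenvalues]
  simpa using Real.prod_le_arith_mean_pow _ hG.eigenvalues_nonneg

theorem Matrix.abs_det_le_of_forall_abs_apply_le {n : Type*} [Fintype n] [DecidableEq n]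
    (N : Matrix n n ℝ) {a : ℝ} (ha : 0 ≤ a) (hN : ∀ i j, |N i j| ≤ a) :
    |N.det| ≤ (a * √(Fintype.card n)) ^ Fintype.card n := by
  have htrace : (Nᴴ * N).trace ≤ a ^ 2 * Fintype.card n * Fintype.card n := by
    have hsq : ∀ i j, N i j * N i j ≤ a ^ 2 := fun i j => by
      rw [← sq, ← sq_abs]; exact pow_le_pow_left₀ (abs_nonneg _) (hN i j) 2
    calc (Nᴴ * N).trace = ∑ j, ∑ i, N i j * N i j := by simp [trace, mul_apply]
      _ ≤ ∑ _j : n, ∑ _i : n, a ^ 2 := by gcongr with j _ i; exact hsq i j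
      _ = _ := by simp only [sum_const, card_univ, nsmul_eq_mul]; ring
  refine abs_le_of_sq_le_sq ?_ (by positivity)
  calc N.det ^ 2 = (Nᴴ * N).det := by simp [det_mul, sq]
    _ ≤ ((Nᴴ * N).trace / Fintype.card n) ^ Fintype.card n :=
        (posSemidef_conjTranspose_mul_self N).det_le_trace_div_card_pow
    _ ≤ (a ^ 2 * Fintype.card n) ^ Fintype.card n := by
        gcongr
        · exact div_nonneg (posSemidef_conjTranspose_mul_self N).trace_nonneg (by positivity)
        · exact div_le_of_le_mul₀ (by positivity) (by positivity) htrace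
    _ = ((a * √(Fintype.card n)) ^ Fintype.card n) ^ 2 := by
        rw [← pow_mul, mul_comm _ 2, pow_mul, mul_pow a, Real.sq_sqrt (by positivity), mul_pow]

theorem Matrix.abs_det_le_one_of_abs_apply_le_inv_sqrt {n : Type*} [Fintype n] [DecidableEq n]
    (N : Matrix n n ℝ) {c : ℝ} (hn : (Fintype.card n : ℝ) ≤ c)
    (hN : ∀ i j, |N i j| ≤ (√c)⁻¹) :
    |N.det| ≤ 1 :=
  calc |N.det| ≤ ((√c)⁻¹ * √(Fintype.card n)) ^ Fintype.card n :=
        abs_det_le_of_forall_abs_apply_le N (by positivity) hN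
    _ ≤ 1 := pow_le_one₀ (by positivity)
        (inv_mul_le_one_of_le₀ (Real.sqrt_le_sqrt hn) (Real.sqrt_nonneg _))

theorem Matrix.det_eq_det_toSquareBlockProp_of_unit_cols {m R : Type*} [Fintype m]
    [DecidableEq m] [CommRing R] (M : Matrix m m R) (p : m → Prop) [DecidablePred p]
    (hM : ∀ i j, p j → M i j = (1 : Matrix m m R) i j) :
    M.det = (M.toSquareBlockProp fun i => ¬p i).det := by
  have hunit : M.toSquareBlockProp p = 1 := by
    ext i j
    simp [toSquareBlockProp_def, hM _ _ j.2, one_apply, Subtype.ext_iff]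
  rw [M.twoBlockTriangular_det p fun i hi j hj => by
    rw [hM i j hj, one_apply_ne fun h : i = j => hi (h ▸ hj)], hunit, det_one, one_mul]

theorem abs_colsDet_eq_abs_det_submatrix {m n : ℕ} (A : Matrix (Fin m) (Fin n) ℝ)
    (S : Finset (Fin n)) (τ : Fin m ≃ S) :
    |colsDet A S| = |(A.submatrix id fun j => (τ j : Fin n)).det| := by
  have hS : S.card = m := by simpa using (Fintype.card_congr τ).symm
  have hperm : A.submatrix id (S.orderEmbOfFin hS) =
      (A.submatrix id fun j => (τ j : Fin n)).submatrix (Equiv.refl _)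
        ((S.orderIsoOfFin hS).toEquiv.trans τ.symm) := by
    ext i j
    simp [coe_orderIsoOfFin_apply]
  rw [colsDet, dif_pos hS, hperm, abs_det_submatrix_equiv_equiv]

theorem exists_abs_colsDet_eq_of_unit_cols {m n : ℕ} (A : Matrix (Fin m) (Fin n) ℝ)
    (ι : Fin m ↪ Fin n) (hA : ∀ i j, A i (ι j) = (1 : Matrix (Fin m) (Fin m) ℝ) i j)
    (J : Finset (Fin n)) (hJ : J.card = m) :
    ∃ g : {i // ι i ∉ J} ≃ {x : J // (x : Fin n) ∉ Set.range ι},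
      |colsDet A J| = |(Matrix.of fun i j : {i // ι i ∉ J} => A i (g j)).det| := by
  classical
  let e : {i // ι i ∈ J} ≃ {x : J // (x : Fin n) ∈ Set.range ι} :=
    Equiv.ofBijective (fun i => ⟨⟨ι i, i.2⟩, i, rfl⟩)
      ⟨fun i j h => Subtype.ext (ι.injective (congrArg (fun x => x.1.1) h)),
        fun ⟨x, i, hi⟩ => ⟨⟨i, hi ▸ x.2⟩, by ext; simp [hi]⟩⟩
  have hcard :
      Fintype.card {i // ι i ∉ J} = Fintype.card {x : J // (x : Fin n) ∉ Set.range ι} := by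
    rw [Fintype.card_subtype_compl, Fintype.card_subtype_compl, Fintype.card_congr e]
    simp [hJ]
  let g := Fintype.equivOfCardEq hcard
  -- `τ` puts the identity column `ι i` in position `i` whenever `ι i ∈ J`.
  let τ : Fin m ≃ J :=
    (Equiv.sumCompl _).symm.trans ((Equiv.sumCongr e g).trans (Equiv.sumCompl _))
  refine ⟨g, ?_⟩
  rw [abs_colsDet_eq_abs_det_submatrix A J τ,
    det_eq_det_toSquareBlockProp_of_unit_cols _ (fun i => ι i ∈ J)]
  · congr
    ext i j
    simp [τ, toSquareBlockProp_def]
  · intro i j hj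
    simp [τ, hj]
    exact hA i j

theorem Finset.card_symmDiff_eq_two_mul_card_sdiff {α : Type*} [DecidableEq α] {s t : Finset α}
    (h : s.card = t.card) : (symmDiff s t).card = 2 * (s \ t).card := by
  rw [symmDiff_def, sup_eq_union, card_union_of_disjoint disjoint_sdiff_sdiff, card_sdiff_comm h]
  ring

theorem Finset.card_map_univ_sdiff {α β : Type*} [Fintype α] [DecidableEq β] (ι : α ↪ β)
    (J : Finset β) : (univ.map ι \ J).card = Fintype.card {i // ι i ∉ J} := by
  rw [Fintype.card_subtype, sdiff_eq_filter, filter_map, card_map]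
  rfl

theorem identity_block_local_max_general {k c : ℕ}
    (H : Matrix (Fin k) (Fin k) ℝ)
    (hH1 : ∀ i j, H i j = 1 ∨ H i j = -1)
    (A : Matrix (Fin k) (Fin (2 * k)) ℝ)
    (hA1 : ∀ (i : Fin k) (j : Fin (2 * k)), (j : ℕ) < k →
      A i j = if (i : ℕ) = (j : ℕ) then 1 else 0)
    (hA2 : ∀ (i : Fin k) (j : Fin (2 * k)) (j' : Fin k), (j : ℕ) = k + (j' : ℕ) →
      A i j = (Real.sqrt c)⁻¹ * H i j')
    (K : Finset (Fin (2 * k))) (hK : ∀ x, x ∈ K ↔ (x : ℕ) < k) :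
    (∀ J : Finset (Fin (2 * k)), J.card = k → (symmDiff K J).card ≤ 2 * c →
      |colsDet A J| ≤ 1) ∧ |colsDet A K| = 1 := by
  let ι : Fin k ↪ Fin (2 * k) := Fin.castLEEmb (by omega)
  have hιA : ∀ i j, A i (ι j) = (1 : Matrix (Fin k) (Fin k) ℝ) i j := fun i j => by
    simp [ι, hA1, one_apply, Fin.ext_iff]
  have hKι : K = univ.map ι := by
    ext x
    simp [hK, ι, ← Set.mem_range, Fin.range_castLE]
  have hKcard : K.card = k := by simp [hKι]
  have hentry : ∀ i x, x ∉ Set.range ι → |A i x| ≤ (√c)⁻¹ := by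
    intro i x hx
    have hkx : k ≤ (x : ℕ) := by simpa [ι, Fin.range_castLE] using hx
    have hH : |H i ⟨x - k, by omega⟩| = 1 := by
      rcases hH1 i ⟨x - k, by omega⟩ with h | h <;> simp [h]
    rw [hA2 i x ⟨x - k, by omega⟩ (Nat.add_sub_of_le hkx).symm, abs_mul, hH, mul_one, abs_inv,
      abs_of_nonneg (Real.sqrt_nonneg _)]
  refine ⟨fun J hJ hKJ => ?_, ?_⟩
  · obtain ⟨g, hg⟩ := exists_abs_colsDet_eq_of_unit_cols A ι hιA J hJ
    have hcard : Fintype.card {i // ι i ∉ J} ≤ c := by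
      have := card_symmDiff_eq_two_mul_card_sdiff (hKcard.trans hJ.symm)
      rw [← card_map_univ_sdiff, ← hKι]
      omega
    rw [hg]
    exact abs_det_le_one_of_abs_apply_le_inv_sqrt _ (by exact_mod_cast hcard)
      fun i j => hentry i _ (g j).2
  · obtain ⟨g, hg⟩ := exists_abs_colsDet_eq_of_unit_cols A ι hιA K hKcard
    have : IsEmpty {i // ι i ∉ K} := ⟨fun i => i.2 (by simp [hKι])⟩
    rw [hg, det_isEmpty, abs_one]

/-- **Remark after Theorem 1.2** (local-maximum property of the identity block).
`A = [I_k | c^{−1/2} H] ∈ ℝ^{k×2k}` with `H` a Hadamard matrix; columns are indexed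
0-based by `Fin (2k)`, with `K = {0,…,k−1}` the columns of the identity block. For
every column set `J` of size `k` with `|K Δ J| ≤ 2c`, we have
`|det A_{[k],J}| ≤ 1 = |det A_{[k],K}|`; i.e. `([k], K)` is a `(c,1)`-local maximum. -/
theorem identity_block_local_max {k c : ℕ} (hk : 1 ≤ k) (hc1 : 1 ≤ c) (hck : c ≤ k)
    (H : Matrix (Fin k) (Fin k) ℝ)
    (hH1 : ∀ i j, H i j = 1 ∨ H i j = -1)
    (hH2 : H.transpose * H = (k : ℝ) • (1 : Matrix (Fin k) (Fin k) ℝ))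
    (A : Matrix (Fin k) (Fin (2 * k)) ℝ)
    (hA1 : ∀ (i : Fin k) (j : Fin (2 * k)), (j : ℕ) < k →
      A i j = if (i : ℕ) = (j : ℕ) then 1 else 0)
    (hA2 : ∀ (i : Fin k) (j : Fin (2 * k)) (j' : Fin k), (j : ℕ) = k + (j' : ℕ) →
      A i j = (Real.sqrt c)⁻¹ * H i j')
    (K : Finset (Fin (2 * k))) (hK : ∀ x, x ∈ K ↔ (x : ℕ) < k) :
    (∀ J : Finset (Fin (2 * k)), J.card = k → (symmDiff K J).card ≤ 2 * c →
      |colsDet A J| ≤ 1) ∧ |colsDet A K| = 1 :=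
  identity_block_local_max_general H hH1 A hA1 hA2 K hK
end

section
/- (Mathematical content of Lemma 3.5 / the crude approximation algorithm of Section 6.) Let A ∈ ℝ^{m×n}, let k ≤ min(m,n), and let B = A·Aᵀ ∈ ℝ^{m×m}. Let ρ, ρ' ≥ 1. Suppose R ⊆ {1,…,m} with |R| = k satisfies ρ·det(B_{R,R}) ≥ det(B_{R',R'}) for every R' ⊆ {1,…,m} with |R'| = k. Let C = A_{R,{1,…,n}} ∈ ℝ^{k×n}, D = Cᵀ·C ∈ ℝ^{n×n}, and suppose J ⊆ {1,…,n} with |J| = k satisfies ρ'·det(D_{J,J}) ≥ det(D_{J',J'}) for every J' ⊆ {1,…,n} with |J'| = k. Then for every I ⊆ {1,…,m} and W ⊆ {1,…,n} with |I| = |W| = k, det(A_{I,W})² ≤ C(n,k)·ρ·ρ'·det(A_{R,J})², where C(n,k) is the binomial coefficient n choose k. -/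
open Finset Matrix

theorem cb_aux {k n : ℕ} {M : Matrix (Fin k) (Fin n) ℝ} {N : Matrix (Fin n) (Fin k) ℝ}
    {p : Fin k → Fin n} (H : ¬Function.Injective p) :
    (∑ σ : Equiv.Perm (Fin k),
      (Equiv.Perm.sign σ : ℝ) * ∏ x, M (σ x) (p x) * N (p x) x) = 0 := by
  obtain ⟨i, j, hpij, hij⟩ : ∃ i j, p i = p j ∧ i ≠ j := by
    rw [Function.Injective] at H
    push_neg at H
    obtain ⟨i, j, h1, h2⟩ := H
    exact ⟨i, j, h1, h2⟩
  exact
    Finset.sum_involution (fun σ _ => σ * Equiv.swap i j)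
      (fun σ _ => by
        have : (∏ x, M (σ x) (p x)) = ∏ x, M ((σ * Equiv.swap i j) x) (p x) :=
          Fintype.prod_equiv (Equiv.swap i j) _ _ (by simp [Equiv.apply_swap_eq_self hpij])
        simp [this, Equiv.Perm.sign_swap hij, -Equiv.Perm.sign_swap', prod_mul_distrib])
      (fun σ _ _ => (not_congr Equiv.mul_swap_eq_iff).mpr hij) (fun _ _ => Finset.mem_univ _)
      fun σ _ => Equiv.mul_swap_involutive i j σ

/-- Column-submatrix product of determinants, used in Cauchy–Binet. -/
noncomputable def colSub {k n : ℕ} (M : Matrix (Fin k) (Fin n) ℝ)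
    (N : Matrix (Fin n) (Fin k) ℝ) (S : Finset (Fin n)) : ℝ :=
  if h : S.card = k then
    (M.submatrix id (S.orderEmbOfFin h)).det * (N.submatrix (S.orderEmbOfFin h) id).det
  else 0

theorem cauchy_binet {k n : ℕ} (M : Matrix (Fin k) (Fin n) ℝ) (N : Matrix (Fin n) (Fin k) ℝ) :
    (M * N).det = ∑ S ∈ Finset.univ.powersetCard k, colSub M N S := by
  set F : (Fin k → Fin n) → ℝ := fun p =>
    ∑ σ : Equiv.Perm (Fin k), (Equiv.Perm.sign σ : ℝ) * ∏ i, M (σ i) (p i) * N (p i) i with hF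
  have step1 : (M * N).det = ∑ p : Fin k → Fin n, F p := by
    simp only [hF, det_apply', mul_apply, prod_univ_sum, mul_sum, Fintype.piFinset_univ]
    rw [Finset.sum_comm]
  have step2 : (M * N).det
      = ∑ p ∈ Finset.univ.filter fun p : Fin k → Fin n => Function.Injective p, F p := by
    rw [step1]
    refine (Finset.sum_subset (Finset.filter_subset _ _) fun p _ hp => ?_).symm
    exact cb_aux (by simpa using hp)
  have step3 : ∀ S ∈ Finset.univ.powersetCard k,
      ∑ p ∈ (Finset.univ.filter fun p : Fin k → Fin n => Function.Injective p).filter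
          (fun p => Finset.image p Finset.univ = S), F p = colSub M N S := by
    intro S hS
    have h : S.card = k := (Finset.mem_powersetCard.mp hS).2
    set e := S.orderEmbOfFin h with he
    -- inner sum equals sum over bijections q of F (e ∘ q)
    have claim2 : ∑ p ∈ (Finset.univ.filter fun p : Fin k → Fin n => Function.Injective p).filter
          (fun p => Finset.image p Finset.univ = S), F p
        = ∑ q ∈ Finset.univ.filter fun q : Fin k → Fin k => Function.Injective q, F (⇑e ∘ q) := by
      have haux : ∀ (x : Fin n) (hx : x ∈ S), e ((S.orderIsoOfFin h).symm ⟨x, hx⟩) = x :=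
        fun x hx => by rw [← Finset.coe_orderIsoOfFin_apply, OrderIso.apply_symm_apply]
      refine Finset.sum_bij'
        (fun p hp => fun x => (S.orderIsoOfFin h).symm ⟨p x, by
          have := (Finset.mem_filter.mp hp).2
          rw [← this]; exact Finset.mem_image_of_mem p (Finset.mem_univ x)⟩)
        (fun q _ => ⇑e ∘ q) ?_ ?_ ?_ ?_ ?_
      · intro p hp
        have hinj : Function.Injective p := by
          have := (Finset.mem_filter.mp (Finset.mem_filter.mp hp).1).2
          simpa using this
        simp only [Finset.mem_filter, Finset.mem_univ, true_and]
        intro a b hab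
        apply hinj
        have := congrArg (fun z => ((S.orderIsoOfFin h) z : Fin n)) hab
        simpa using this
      · intro q hq
        have hqinj : Function.Injective q := by
          have := (Finset.mem_filter.mp hq).2; simpa using this
        have heq : Function.Injective (⇑e ∘ q) := e.injective.comp hqinj
        have hqbij : Function.Bijective q := Finite.injective_iff_bijective.mp hqinj
        refine Finset.mem_filter.mpr ⟨Finset.mem_filter.mpr ⟨Finset.mem_univ _, heq⟩, ?_⟩
        have himq : Finset.image q Finset.univ = Finset.univ := by
          ext x; simp [hqbij.surjective x]
        have him : Finset.image ⇑e Finset.univ = S := by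
          ext x
          simp only [Finset.mem_image, Finset.mem_univ, true_and]
          constructor
          · rintro ⟨i, rfl⟩; exact S.orderEmbOfFin_mem h i
          · intro hx
            exact ⟨(S.orderIsoOfFin h).symm ⟨x, hx⟩,
              by rw [← Finset.coe_orderIsoOfFin_apply, OrderIso.apply_symm_apply]⟩
        show Finset.image (⇑e ∘ q) Finset.univ = S
        rw [← Finset.image_image, himq, him]
      · intro p hp
        funext x
        exact haux _ _
      · intro q hq
        funext x
        simp only [Function.comp_apply]
        rw [OrderIso.symm_apply_eq]
        exact Subtype.ext (Finset.coe_orderIsoOfFin_apply S h (q x)).symm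
      · intro p hp
        exact congrArg F (funext fun x => (haux _ _).symm)
    -- sum over injective q of F (e ∘ q) equals det M' * det N'
    have claim1 : ∑ q ∈ Finset.univ.filter fun q : Fin k → Fin k => Function.Injective q,
        F (⇑e ∘ q)
        = (M.submatrix id ⇑e).det * (N.submatrix ⇑e id).det := by
      rw [← det_mul]
      have s1 : (M.submatrix id ⇑e * N.submatrix ⇑e id).det
          = ∑ q : Fin k → Fin k, F (⇑e ∘ q) := by
        simp only [hF, det_apply', mul_apply, prod_univ_sum, mul_sum, Fintype.piFinset_univ,
          submatrix_apply, id_eq, Function.comp_apply]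
        rw [Finset.sum_comm]
      rw [s1]
      refine Finset.sum_subset (Finset.filter_subset _ _) fun q _ hq => ?_
      have : ¬Function.Injective (⇑e ∘ q) := by
        intro hcontra
        have hq' : ¬Function.Injective q := by simpa using hq
        exact hq' (Function.Injective.of_comp hcontra)
      exact cb_aux this
    rw [claim2, claim1, colSub, dif_pos h]
  rw [step2, ← Finset.sum_fiberwise_of_maps_to (g := fun p => Finset.image p Finset.univ)
    (fun p hp => ?_)]
  · exact Finset.sum_congr rfl step3
  · have hpinj : Function.Injective p := by simpa using (Finset.mem_filter.mp hp).2
    exact Finset.mem_powersetCard.mpr ⟨Finset.subset_univ _,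
      by rw [Finset.card_image_of_injective _ hpinj, Finset.card_univ, Fintype.card_fin]⟩

theorem subdet_eq {m n k : ℕ} (A : Matrix (Fin m) (Fin n) ℝ) {R : Finset (Fin m)}
    {C : Finset (Fin n)} (hR : R.card = k) (hC : C.card = k) :
    subdet A R C = (A.submatrix (R.orderEmbOfFin hR) (C.orderEmbOfFin hC)).det := by
  subst hR
  rw [subdet, dif_pos hC.symm]

/-- Gram identity for rows: the principal minor of `A * Aᵀ` on `I` is the
sum of squares of the `k × k` minors of `A` with rows `I`. -/
theorem gram_rows {m n k : ℕ} (A : Matrix (Fin m) (Fin n) ℝ) {I : Finset (Fin m)}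
    (hI : I.card = k) :
    subdet (A * Aᵀ) I I = ∑ S ∈ Finset.univ.powersetCard k, (subdet A I S) ^ 2 := by
  set eI := I.orderEmbOfFin hI with heI
  have hsub : (A * Aᵀ).submatrix ⇑eI ⇑eI
      = A.submatrix ⇑eI id * (A.submatrix ⇑eI id)ᵀ := by
    ext i j
    simp [Matrix.mul_apply]
  rw [subdet_eq (A * Aᵀ) hI hI, hsub, cauchy_binet]
  refine Finset.sum_congr rfl fun S hS => ?_
  have hSc : S.card = k := (Finset.mem_powersetCard.mp hS).2
  rw [colSub, dif_pos hSc, subdet_eq A hI hSc, sq]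
  have e1 : (A.submatrix ⇑eI id).submatrix id ⇑(S.orderEmbOfFin hSc)
      = A.submatrix ⇑eI ⇑(S.orderEmbOfFin hSc) := by ext i j; simp
  have e2 : (A.submatrix ⇑eI id)ᵀ.submatrix ⇑(S.orderEmbOfFin hSc) id
      = (A.submatrix ⇑eI ⇑(S.orderEmbOfFin hSc))ᵀ := by ext i j; simp
  rw [e1, e2, det_transpose]

/-- Gram identity for columns: with `C = A_{R,[n]}`, the principal minor of
`Cᵀ * C` on `S` is the square of the minor `det A_{R,S}`. -/
theorem gram_cols {m n k : ℕ} (A : Matrix (Fin m) (Fin n) ℝ) {R : Finset (Fin m)}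
    {S : Finset (Fin n)} (hR : R.card = k) (hS : S.card = k) :
    subdet ((A.submatrix (R.orderEmbOfFin hR) id)ᵀ * A.submatrix (R.orderEmbOfFin hR) id) S S
      = (subdet A R S) ^ 2 := by
  set eR := R.orderEmbOfFin hR with heR
  set eS := S.orderEmbOfFin hS with heS
  have hsub : ((A.submatrix ⇑eR id)ᵀ * A.submatrix ⇑eR id).submatrix ⇑eS ⇑eS
      = (A.submatrix ⇑eR ⇑eS)ᵀ * A.submatrix ⇑eR ⇑eS := by
    ext i j
    simp [Matrix.mul_apply]
  rw [subdet_eq _ hS hS, hsub, det_mul, det_transpose, subdet_eq A hR hS, sq]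


/-- **Lemma 3.5 / Section 6** (mathematical content of the crude approximation
algorithm). Let `B = A·Aᵀ`; suppose `R` `ρ`-approximately maximizes the principal
`k × k` minors of `B`, and, with `C = A_{R,[n]}` and `D = Cᵀ·C`, suppose `J`
`ρ'`-approximately maximizes the principal `k × k` minors of `D`. Then for all
row/column sets `I, W` of size `k`,
`det(A_{I,W})² ≤ C(n,k)·ρ·ρ'·det(A_{R,J})²`. -/
theorem crude_approximation {m n k : ℕ} (hkm : k ≤ m) (hkn : k ≤ n)
    (A : Matrix (Fin m) (Fin n) ℝ) (ρ ρ' : ℝ) (hρ : 1 ≤ ρ) (hρ' : 1 ≤ ρ')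
    (R : Finset (Fin m)) (hR : R.card = k)
    (hRmax : ∀ R' : Finset (Fin m), R'.card = k →
      subdet (A * Aᵀ) R' R' ≤ ρ * subdet (A * Aᵀ) R R)
    (J : Finset (Fin n)) (hJ : J.card = k)
    (hJmax : ∀ J' : Finset (Fin n), J'.card = k →
      subdet ((A.submatrix (R.orderEmbOfFin hR) id)ᵀ * A.submatrix (R.orderEmbOfFin hR) id)
          J' J' ≤
        ρ' * subdet
          ((A.submatrix (R.orderEmbOfFin hR) id)ᵀ * A.submatrix (R.orderEmbOfFin hR) id)
          J J) :
    ∀ (I : Finset (Fin m)) (W : Finset (Fin n)), I.card = k → W.card = k →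
      (subdet A I W) ^ 2 ≤ (n.choose k : ℝ) * ρ * ρ' * (subdet A R J) ^ 2 := by
  intro I W hI hW
  have hρ0 : (0 : ℝ) ≤ ρ := le_trans zero_le_one hρ
  have h1 : (subdet A I W) ^ 2 ≤ subdet (A * Aᵀ) I I := by
    rw [gram_rows A hI]
    exact Finset.single_le_sum (f := fun S => (subdet A I S) ^ 2)
      (fun S _ => sq_nonneg _) (Finset.mem_powersetCard.mpr ⟨Finset.subset_univ _, hW⟩)
  have h2 : subdet (A * Aᵀ) I I ≤ ρ * subdet (A * Aᵀ) R R := hRmax I hI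
  have h4 : ∀ S ∈ Finset.univ.powersetCard k,
      (subdet A R S) ^ 2 ≤ ρ' * (subdet A R J) ^ 2 := by
    intro S hS
    have hSc : S.card = k := (Finset.mem_powersetCard.mp hS).2
    rw [← gram_cols A hR hSc, ← gram_cols A hR hJ]
    exact hJmax S hSc
  have h5 : subdet (A * Aᵀ) R R ≤ (n.choose k : ℝ) * (ρ' * (subdet A R J) ^ 2) := by
    rw [gram_rows A hR]
    calc ∑ S ∈ Finset.univ.powersetCard k, (subdet A R S) ^ 2
        ≤ ∑ _S ∈ Finset.univ.powersetCard k, ρ' * (subdet A R J) ^ 2 :=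
          Finset.sum_le_sum h4
      _ = (n.choose k : ℝ) * (ρ' * (subdet A R J) ^ 2) := by
          rw [Finset.sum_const, Finset.card_powersetCard, Finset.card_univ, Fintype.card_fin,
            nsmul_eq_mul]
  calc (subdet A I W) ^ 2 ≤ ρ * subdet (A * Aᵀ) R R := le_trans h1 h2
    _ ≤ ρ * ((n.choose k : ℝ) * (ρ' * (subdet A R J) ^ 2)) :=
        mul_le_mul_of_nonneg_left h5 hρ0
    _ = (n.choose k : ℝ) * ρ * ρ' * (subdet A R J) ^ 2 := by ring
end
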